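/- arXiv:2104.14253 — 2 statements merged into one kernel-verified Lean document; each statement's English description precedes it below -/
import Mathlib

section
/- For X ≥ 1, we have ∑_{n ≤ X} d(n)/n = (1/2)log²(X) + 2γ·log(X) + θ·(2·(16/3) + 2γ - 1) for some real θ with |θ| ≤ 1. -/
/-!
Writing `d(n)/n = ∑_{de = n} 1/(de)` and summing over `d` first turns the sum into
`∑_{d ≤ X} H(⌊X/d⌋)/d`, with `H` the harmonic numbers. The Euler–Mascheroni sequences
`H m - log (m + 1) < γ < H m - log m` give `H(⌊t⌋) = log t + γ + O(2/t)`, so the sum is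
`(log X + γ) H(⌊X⌋) - ∑_{d ≤ X} log d / d` up to an error `2`. Comparing `log d / d` with the
increments of `log² x / 2` shows that the last sum is `log² X / 2` up to `2`; collecting terms,
the total error is at most `7 < 2 · 16/3 + 2γ - 1`.
-/

open Finset Real

theorem Nat.sum_Icc_sum_divisorsAntidiagonal {M : Type*} [AddCommMonoid M] (f : ℕ → ℕ → M)
    (N : ℕ) :
    ∑ n ∈ Icc 1 N, ∑ p ∈ n.divisorsAntidiagonal, f p.1 p.2 =
      ∑ d ∈ Icc 1 N, ∑ e ∈ Icc 1 (N / d), f d e := by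
  rw [sum_sigma', sum_sigma']
  refine sum_nbij' (fun x ↦ ⟨x.2.1, x.2.2⟩) (fun y ↦ ⟨y.1 * y.2, (y.1, y.2)⟩) ?_ ?_ ?_ ?_ ?_
  · rintro ⟨n, d, e⟩ h
    simp only [mem_sigma, mem_Icc, Nat.mem_divisorsAntidiagonal] at h ⊢
    obtain ⟨⟨-, hN⟩, rfl, hde⟩ := h
    have hd : 0 < d := Nat.pos_of_ne_zero (left_ne_zero_of_mul hde)
    have he : 0 < e := Nat.pos_of_ne_zero (right_ne_zero_of_mul hde)
    refine ⟨⟨hd, (Nat.le_mul_of_pos_right d he).trans hN⟩, he, ?_⟩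
    rwa [Nat.le_div_iff_mul_le hd, mul_comm]
  · rintro ⟨d, e⟩ h
    simp only [mem_sigma, mem_Icc, Nat.mem_divisorsAntidiagonal] at h ⊢
    obtain ⟨⟨hd, -⟩, he, heN⟩ := h
    rw [Nat.le_div_iff_mul_le hd, mul_comm] at heN
    exact ⟨⟨Nat.mul_pos hd he, heN⟩, trivial, (Nat.mul_pos hd he).ne'⟩
  · rintro ⟨n, d, e⟩ h
    simp only [mem_sigma, Nat.mem_divisorsAntidiagonal] at h
    simp [h.2.1]
  · intro _ _; rfl
  · intro _ _; rfl

theorem Nat.card_divisors_div_eq_sum_divisorsAntidiagonal (n : ℕ) :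
    (n.divisors.card : ℝ) / n = ∑ p ∈ n.divisorsAntidiagonal, ((p.1 : ℝ) * p.2)⁻¹ := by
  rw [sum_divisorsAntidiagonal (fun d e ↦ ((d : ℝ) * e)⁻¹), div_eq_mul_inv, ← nsmul_eq_mul,
    ← sum_const]
  refine sum_congr rfl fun d hd ↦ ?_
  rw [← Nat.cast_mul, Nat.mul_div_cancel' (Nat.dvd_of_mem_divisors hd)]

namespace Real

theorem inv_add_one_le_log_add_one_sub_log {x : ℝ} (hx : 0 < x) :
    (x + 1)⁻¹ ≤ log (x + 1) - log x := by
  have h := one_sub_inv_le_log_of_pos (div_pos (by linarith : 0 < x + 1) hx)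
  rw [log_div (by positivity) hx.ne', inv_div] at h
  calc (x + 1)⁻¹ = 1 - x / (x + 1) := by field_simp; ring
    _ ≤ _ := h

theorem log_add_one_sub_log_le_inv {x : ℝ} (hx : 0 < x) :
    log (x + 1) - log x ≤ x⁻¹ := by
  have h := log_le_sub_one_of_pos (div_pos (by linarith : 0 < x + 1) hx)
  rw [log_div (by positivity) hx.ne'] at h
  calc _ ≤ (x + 1) / x - 1 := h
    _ = x⁻¹ := by field_simp; ring

theorem abs_harmonic_floor_sub_log_sub_eulerMascheroniConstant_le {t : ℝ} (ht : 1 ≤ t) :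
    |(harmonic ⌊t⌋₊ : ℝ) - (log t + eulerMascheroniConstant)| ≤ 2 / t := by
  set m := ⌊t⌋₊
  have hm1 : 1 ≤ m := Nat.one_le_floor_iff t |>.mpr ht
  have hm : (1 : ℝ) ≤ m := by exact_mod_cast hm1
  have hmt : (m : ℝ) ≤ t := Nat.floor_le (by linarith)
  have htm : t < m + 1 := Nat.lt_floor_add_one t
  have hlow := eulerMascheroniConstant_lt_eulerMascheroniSeq' m
  have hup := eulerMascheroniSeq_lt_eulerMascheroniConstant m
  rw [eulerMascheroniSeq', if_neg (by omega)] at hlow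
  rw [eulerMascheroniSeq] at hup
  have hlog_m : log m ≤ log t := log_le_log (by positivity) hmt
  have hlog_t : log t ≤ log (m + 1) := log_le_log (by positivity) htm.le
  have hgap := log_add_one_sub_log_le_inv (by positivity : (0 : ℝ) < m)
  have hinv : (m : ℝ)⁻¹ ≤ 2 / t := by
    rw [inv_eq_one_div, div_le_div_iff₀ (by positivity) (by positivity)]; linarith
  rw [abs_le]; constructor <;> linarith

theorem log_add_one_sq_sub_log_sq_le {x : ℝ} (hx : 1 ≤ x) :
    log (x + 1) ^ 2 / 2 - log x ^ 2 / 2 ≤ log x / x + (x ^ 2)⁻¹ / 2 := by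
  have hx0 : 0 < x := by linarith
  have hδ := log_add_one_sub_log_le_inv hx0
  have hδ0 : 0 ≤ log (x + 1) - log x :=
    le_trans (by positivity) (inv_add_one_le_log_add_one_sub_log hx0)
  set δ := log (x + 1) - log x
  have hsplit : log (x + 1) ^ 2 / 2 - log x ^ 2 / 2 = δ * log x + δ ^ 2 / 2 := by
    simp only [δ]; ring
  rw [hsplit, div_eq_mul_inv (log x), mul_comm (log x), ← inv_pow]
  gcongr
  exact log_nonneg hx

theorem log_add_one_div_sub_le_log_add_one_sq_sub_log_sq {x : ℝ} (hx : 0 < x) :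
    log (x + 1) / (x + 1) - (x ^ 2)⁻¹ / 2 ≤ log (x + 1) ^ 2 / 2 - log x ^ 2 / 2 := by
  have hδ := log_add_one_sub_log_le_inv hx
  have hδ' := inv_add_one_le_log_add_one_sub_log hx
  have hδ0 : 0 ≤ log (x + 1) - log x := le_trans (by positivity) hδ'
  set δ := log (x + 1) - log x
  have hsplit : log (x + 1) ^ 2 / 2 - log x ^ 2 / 2 = δ * log (x + 1) - δ ^ 2 / 2 := by
    simp only [δ]; ring
  rw [hsplit, div_eq_mul_inv (log (x + 1)), mul_comm (log (x + 1)), ← inv_pow]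
  gcongr
  exact log_nonneg (by linarith)

end Real

theorem sum_Icc_log_div_le {N : ℕ} (hN : 1 ≤ N) :
    ∑ n ∈ Icc 1 N, log n / n ≤ log N ^ 2 / 2 + (∑ k ∈ Ico 1 N, ((k : ℝ) ^ 2)⁻¹) / 2 := by
  induction N, hN using Nat.le_induction with
  | base => simp
  | succ N hN ih =>
    have hstep := log_add_one_div_sub_le_log_add_one_sq_sub_log_sq
      (by positivity : (0 : ℝ) < N)
    rw [sum_Icc_succ_top (by omega), sum_Ico_succ_top hN]
    push_cast
    linarith

theorem log_sq_le_sum_Ico_log_div {N : ℕ} (hN : 1 ≤ N) :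
    log N ^ 2 / 2 ≤ ∑ n ∈ Ico 1 N, log n / n + (∑ k ∈ Ico 1 N, ((k : ℝ) ^ 2)⁻¹) / 2 := by
  induction N, hN using Nat.le_induction with
  | base => simp
  | succ N hN ih =>
    have hstep := log_add_one_sq_sub_log_sq_le (by exact_mod_cast hN : (1 : ℝ) ≤ N)
    rw [sum_Ico_succ_top hN, sum_Ico_succ_top hN]
    push_cast
    linarith

theorem abs_sum_Icc_log_div_sub_log_sq_le {N : ℕ} (hN : 1 ≤ N) :
    |∑ n ∈ Icc 1 N, log n / n - log N ^ 2 / 2| ≤ 1 := by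
  have hE : ∑ k ∈ Ico 1 N, ((k : ℝ) ^ 2)⁻¹ ≤ 2 := by
    simpa [← Ico_add_one_left_eq_Ioo] using sum_Ioo_inv_sq_le (α := ℝ) 0 N
  have hupper := sum_Icc_log_div_le hN
  have hlower := log_sq_le_sum_Ico_log_div hN
  rw [← Ico_add_one_right_eq_Icc, sum_Ico_succ_top hN] at hupper ⊢
  have hlast : 0 ≤ log N / N := div_nonneg (log_natCast_nonneg N) N.cast_nonneg
  rw [abs_le]; constructor <;> linarith

theorem abs_sum_Icc_floor_log_div_sub_log_sq_le {X : ℝ} (hX : 1 ≤ X) :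
    |∑ n ∈ Icc 1 ⌊X⌋₊, log n / n - log X ^ 2 / 2| ≤ 2 := by
  set N := ⌊X⌋₊
  have hN1 : 1 ≤ N := Nat.one_le_floor_iff X |>.mpr hX
  have hN : (0 : ℝ) < N := by exact_mod_cast hN1
  have hNX : (N : ℝ) ≤ X := Nat.floor_le (by linarith)
  have hlogN : log N ≤ log X := log_le_log hN hNX
  have hlogX : log X ≤ log (N + 1) := log_le_log (by linarith) (Nat.lt_floor_add_one X).le
  have hgap := log_add_one_sub_log_le_inv hN
  have hlogX_le : log X ≤ N := by
    linarith [log_le_sub_one_of_pos (by linarith : (0 : ℝ) < N + 1)]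
  have hsq : log X ^ 2 / 2 - log N ^ 2 / 2 ≤ 1 :=
    calc log X ^ 2 / 2 - log N ^ 2 / 2 = (log X - log N) * (log X + log N) / 2 := by ring
      _ ≤ (N : ℝ)⁻¹ * (N * 2) / 2 := by
        gcongr
        · linarith [log_natCast_nonneg N]
        · linarith
        · linarith
      _ = 1 := by field_simp
  have hsq0 : log N ^ 2 / 2 ≤ log X ^ 2 / 2 := by gcongr
  have h := abs_sum_Icc_log_div_sub_log_sq_le hN1
  rw [abs_le] at *; constructor <;> linarith

theorem sum_Icc_card_divisors_div_eq (N : ℕ) :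
    ∑ n ∈ Icc 1 N, (n.divisors.card : ℝ) / n =
      ∑ d ∈ Icc 1 N, (d : ℝ)⁻¹ * harmonic (N / d) := by
  simp_rw [Nat.card_divisors_div_eq_sum_divisorsAntidiagonal,
    Nat.sum_Icc_sum_divisorsAntidiagonal fun d e ↦ ((d : ℝ) * e)⁻¹, harmonic_eq_sum_Icc,
    Rat.cast_sum, Rat.cast_inv, Rat.cast_natCast, mul_sum, mul_inv]

theorem abs_sum_inv_mul_harmonic_floor_div_sub_le {X : ℝ} (hX : 1 ≤ X) :
    |∑ d ∈ Icc 1 ⌊X⌋₊, (d : ℝ)⁻¹ * harmonic (⌊X⌋₊ / d) -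
      ((log X + eulerMascheroniConstant) * harmonic ⌊X⌋₊ - ∑ d ∈ Icc 1 ⌊X⌋₊, log d / d)|
      ≤ 2 := by
  set N := ⌊X⌋₊
  have hterm : ∀ d ∈ Icc 1 N, |(d : ℝ)⁻¹ * harmonic (N / d) -
      (d : ℝ)⁻¹ * (log (X / d) + eulerMascheroniConstant)| ≤ 2 / X := by
    intro d hdN
    have hd : (0 : ℝ) < d := by exact_mod_cast (mem_Icc.1 hdN).1
    have hXd : 1 ≤ X / d := by
      rw [one_le_div hd]
      exact (Nat.cast_le.2 (mem_Icc.1 hdN).2).trans (Nat.floor_le (by linarith))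
    have h := abs_harmonic_floor_sub_log_sub_eulerMascheroniConstant_le hXd
    rw [Nat.floor_div_natCast] at h
    calc _ = (d : ℝ)⁻¹ *
            |(harmonic (N / d) : ℝ) - (log (X / d) + eulerMascheroniConstant)| := by
          rw [← mul_sub, abs_mul, abs_of_pos (inv_pos.2 hd)]
      _ ≤ (d : ℝ)⁻¹ * (2 / (X / d)) := by gcongr
      _ = 2 / X := by field_simp
  have hmain : ∑ d ∈ Icc 1 N, (d : ℝ)⁻¹ * (log (X / d) + eulerMascheroniConstant) =
      (log X + eulerMascheroniConstant) * harmonic N - ∑ d ∈ Icc 1 N, log d / d := by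
    rw [harmonic_eq_sum_Icc]
    push_cast
    rw [mul_sum, ← sum_sub_distrib]
    refine sum_congr rfl fun d hdN ↦ ?_
    have hd : (0 : ℝ) < d := by exact_mod_cast (mem_Icc.1 hdN).1
    rw [log_div (by linarith) hd.ne']
    ring
  rw [← hmain, ← sum_sub_distrib]
  calc _ ≤ ∑ d ∈ Icc 1 N, |(d : ℝ)⁻¹ * harmonic (N / d) -
        (d : ℝ)⁻¹ * (log (X / d) + eulerMascheroniConstant)| := abs_sum_le_sum_abs _ _
    _ ≤ ∑ _d ∈ Icc 1 N, 2 / X := sum_le_sum hterm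
    _ = N * (2 / X) := by rw [sum_const, Nat.card_Icc, nsmul_eq_mul, Nat.add_sub_cancel]
    _ ≤ X * (2 / X) := by gcongr; exact Nat.floor_le (by linarith)
    _ = 2 := by field_simp

theorem abs_sum_card_divisors_div_sub_le {X : ℝ} (hX : 1 ≤ X) :
    |∑ n ∈ Icc 1 ⌊X⌋₊, (n.divisors.card : ℝ) / n -
      (1 / 2 * log X ^ 2 + 2 * eulerMascheroniConstant * log X)| ≤ 7 := by
  set γ := eulerMascheroniConstant
  set H : ℝ := (harmonic ⌊X⌋₊ : ℝ)
  set L := ∑ n ∈ Icc 1 ⌊X⌋₊, log n / n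
  set S := ∑ d ∈ Icc 1 ⌊X⌋₊, (d : ℝ)⁻¹ * harmonic (⌊X⌋₊ / d)
  have hS : |S - ((log X + γ) * H - L)| ≤ 2 := abs_sum_inv_mul_harmonic_floor_div_sub_le hX
  have hL : |L - log X ^ 2 / 2| ≤ 2 := abs_sum_Icc_floor_log_div_sub_log_sq_le hX
  have hγ0 : 0 < γ := by linarith [one_half_lt_eulerMascheroniConstant]
  have hγ1 : γ < 1 := by linarith [eulerMascheroniConstant_lt_two_thirds]
  have hH : |(log X + γ) * (H - (log X + γ))| ≤ 2 :=
    calc |(log X + γ) * (H - (log X + γ))| = (log X + γ) * |H - (log X + γ)| := by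
          rw [abs_mul, abs_of_nonneg (by linarith [log_nonneg hX])]
      _ ≤ X * (2 / X) := by
          gcongr
          · linarith [log_le_sub_one_of_pos (by linarith : 0 < X)]
          · exact abs_harmonic_floor_sub_log_sub_eulerMascheroniConstant_le hX
      _ = 2 := by field_simp
  have hsplit : S - (1 / 2 * log X ^ 2 + 2 * γ * log X) =
      (S - ((log X + γ) * H - L)) + (log X + γ) * (H - (log X + γ)) + γ ^ 2 -
        (L - log X ^ 2 / 2) := by ring
  rw [sum_Icc_card_divisors_div_eq, hsplit]
  have hγ2 : |γ ^ 2| ≤ 1 := by rw [abs_of_nonneg (by positivity)]; nlinarith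
  calc _ ≤ |S - ((log X + γ) * H - L)| + |(log X + γ) * (H - (log X + γ))| + |γ ^ 2| +
        |L - log X ^ 2 / 2| := (abs_sub _ _).trans (by gcongr; exact abs_add_three _ _ _)
    _ ≤ 7 := by linarith

theorem exists_abs_le_one_eq_add_mul {K : Type*} [Field K] [LinearOrder K]
    [IsStrictOrderedRing K] {a b C : K} (h : |a - b| ≤ C) : ∃ θ : K, |θ| ≤ 1 ∧ a = b + θ * C := by
  rcases ((abs_nonneg _).trans h).eq_or_lt with hC | hC
  · exact ⟨0, by simp, by rw [← hC, abs_nonpos_iff, sub_eq_zero] at h; simp [h]⟩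
  · refine ⟨(a - b) / C, ?_, by field_simp; ring⟩
    rwa [abs_div, abs_of_pos hC, div_le_one hC]

theorem sum_divisor_count_div (X : ℝ) (hX : 1 ≤ X) :
    ∃ θ : ℝ, |θ| ≤ 1 ∧
      ∑ n ∈ Finset.Icc 1 ⌊X⌋₊, (n.divisors.card : ℝ) / n =
        (1 / 2) * Real.log X ^ 2 + 2 * Real.eulerMascheroniConstant * Real.log X
          + θ * (2 * (16 / 3) + 2 * Real.eulerMascheroniConstant - 1) := by
  refine exists_abs_le_one_eq_add_mul ((abs_sum_card_divisors_div_sub_le hX).trans ?_)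
  linarith [one_half_lt_eulerMascheroniConstant]
end

section
/- Let 0 < σ < 1/2, λ > 0, and X ≥ 1. Then ∑_{n > X} d_{1-2σ}(n)/n^{2-2σ+λ} = ζ(2-2σ+λ)/(λ X^λ) + θ·( (1/(2-2σ) + 1/((1-2σ)(1-2σ+λ)))/X^λ + (ζ(2-2σ+λ) + 1/(1-2σ+λ) + 1)/X^{1+λ} ) for some real θ with |θ| ≤ 1. -/
/-!
With `a = 1 - 2σ` and `s = 2 - 2σ + λ = 1 + a + λ`, one has
`d_a(n) / n^s = ∑_{mk = n} m^{-(1+λ)} k^{-s}`, so the tail sum is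
`∑_m m^{-(1+λ)} ∑_{k > X/m} k^{-s}`. For `m > X` the inner sum is all of `ζ(s)`,
and `∑_{m > X} m^{-(1+λ)} = X^{-λ}/λ + O(X^{-1-λ})`: this is the main term. For `m ≤ X` the inner
tail is at most `(X/m)^{1-s}/(s-1) + (X/m)^{-s}`, and summing over `m ≤ X` against
`∑_{m ≤ X} m^{a-1} ≤ X^a/a` and `∑_{m ≤ X} m^a ≤ X^a + X^{1+a}/(1+a)` gives the rest of the error.
Every tail and partial-sum estimate compares `k^r` with `∫_k^{k+1} t^r`.
-/

/-- The generalized sum-of-divisors function `d_a(n) = ∑_{m ∣ n} m^a`. -/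
noncomputable def da (a : ℝ) (n : ℕ) : ℝ := ∑ m ∈ n.divisors, (m : ℝ) ^ a

open Real Set intervalIntegral

section UnitStep

variable {r A : ℝ}

lemma add_one_rpow_le_sub_rpow_div (hr : -1 < r) (hr0 : r ≤ 0) (hA : 0 ≤ A) :
    (A + 1) ^ r ≤ ((A + 1) ^ (r + 1) - A ^ (r + 1)) / (r + 1) := by
  rw [← integral_rpow (Or.inl hr)]
  calc (A + 1) ^ r = ∫ _ in A..A + 1, (A + 1) ^ r := by simp
    _ ≤ ∫ x in A..A + 1, x ^ r :=
      integral_mono_on_of_le_Ioo (by linarith) intervalIntegrable_const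
        (intervalIntegrable_rpow' hr)
        fun x hx => rpow_le_rpow_of_nonpos (hA.trans_lt hx.1) hx.2.le hr0

lemma rpow_le_sub_rpow_div (hr : 0 ≤ r) (hA : 0 ≤ A) :
    A ^ r ≤ ((A + 1) ^ (r + 1) - A ^ (r + 1)) / (r + 1) := by
  rw [← integral_rpow (Or.inl (by linarith))]
  calc A ^ r = ∫ _ in A..A + 1, A ^ r := by simp
    _ ≤ ∫ x in A..A + 1, x ^ r :=
      integral_mono_on_of_le_Ioo (by linarith) intervalIntegrable_const
        (intervalIntegrable_rpow' (by linarith))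
        fun x hx => rpow_le_rpow hA hx.1.le hr

lemma sub_rpow_div_le_rpow (hr : r ≤ 0) (hr1 : r ≠ -1) (hA : 0 < A) :
    ((A + 1) ^ (r + 1) - A ^ (r + 1)) / (r + 1) ≤ A ^ r := by
  have h0 : (0 : ℝ) ∉ uIcc A (A + 1) := by
    rw [uIcc_of_le (by linarith)]
    exact fun h => hA.not_ge h.1
  rw [← integral_rpow (Or.inr ⟨hr1, h0⟩)]
  calc ∫ x in A..A + 1, x ^ r ≤ ∫ _ in A..A + 1, A ^ r :=
      integral_mono_on_of_le_Ioo (by linarith) (intervalIntegrable_rpow (Or.inr h0))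
        intervalIntegrable_const fun x hx => rpow_le_rpow_of_nonpos hA hx.1.le hr
    _ = A ^ r := by simp

end UnitStep

section PowerSums

variable {r : ℝ}

lemma sum_range_add_one_rpow_le_of_nonpos (hr : -1 < r) (hr0 : r ≤ 0) (N : ℕ) :
    ∑ i ∈ Finset.range N, ((i + 1 : ℕ) : ℝ) ^ r ≤ (N : ℝ) ^ (r + 1) / (r + 1) := by
  induction N with
  | zero => simp [zero_rpow (by linarith : r + 1 ≠ 0)]
  | succ n ih =>
    have step := add_one_rpow_le_sub_rpow_div hr hr0 (Nat.cast_nonneg n)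
    rw [sub_div] at step
    rw [Finset.sum_range_succ]
    push_cast at ih ⊢
    linarith

lemma sum_range_add_one_rpow_le (hr : 0 ≤ r) (N : ℕ) :
    ∑ i ∈ Finset.range N, ((i + 1 : ℕ) : ℝ) ^ r ≤ (N : ℝ) ^ r + (N : ℝ) ^ (r + 1) / (r + 1) := by
  induction N with
  | zero =>
    simp only [Finset.range_zero, Finset.sum_empty, Nat.cast_zero]
    positivity
  | succ n ih =>
    have step := rpow_le_sub_rpow_div hr (Nat.cast_nonneg n)
    rw [sub_div] at step
    rw [Finset.sum_range_succ]
    push_cast at ih ⊢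
    linarith

end PowerSums

noncomputable def rpowTail (r Y : ℝ) : ℝ := ∑' k : ℕ, if Y < k then (k : ℝ) ^ r else 0

section RpowTail

variable {r Y : ℝ}

lemma rpowTail_nonneg : 0 ≤ rpowTail r Y :=
  tsum_nonneg fun k => by split_ifs <;> positivity

lemma rpowTail_le_tsum (hr : r < -1) : rpowTail r Y ≤ ∑' k : ℕ, (k : ℝ) ^ r := by
  have hle : ∀ k : ℕ, (if Y < k then (k : ℝ) ^ r else 0) ≤ (k : ℝ) ^ r := fun k => by
    split_ifs <;> [exact le_rfl; positivity]
  have hs := summable_nat_rpow.2 hr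
  exact (hs.of_nonneg_of_le (fun k => by split_ifs <;> positivity) hle).tsum_le_tsum hle hs

lemma rpowTail_of_lt_one (hr : r ≠ 0) (hY : Y < 1) : rpowTail r Y = ∑' k : ℕ, (k : ℝ) ^ r := by
  refine tsum_congr fun k => ?_
  rcases Nat.eq_zero_or_pos k with rfl | hk
  · simp [zero_rpow hr]
  · rw [if_pos (hY.trans_le (by exact_mod_cast hk))]

lemma rpowTail_eq_tsum_add (r : ℝ) (hY : 0 ≤ Y) :
    rpowTail r Y = ∑' n : ℕ, ((n + (⌊Y⌋₊ + 1) : ℕ) : ℝ) ^ r := by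
  rw [rpowTail, ← (add_left_injective (⌊Y⌋₊ + 1)).tsum_eq]
  · refine tsum_congr fun n => if_pos ?_
    push_cast
    linarith [Nat.lt_floor_add_one Y, (Nat.cast_nonneg n : (0 : ℝ) ≤ n)]
  · intro k hk
    have hYk : Y < k := by by_contra h; exact hk (if_neg h)
    exact ⟨k - (⌊Y⌋₊ + 1), Nat.sub_add_cancel ((Nat.floor_lt hY).2 hYk)⟩

lemma rpowTail_le (hr : r < -1) (hY : 0 < Y) : rpowTail r Y ≤ -Y ^ (r + 1) / (r + 1) + Y ^ r := by
  set M : ℕ := ⌊Y⌋₊ + 1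
  have hYM : Y < M := by simpa [M] using Nat.lt_floor_add_one Y
  have hM : (0 : ℝ) < M := hY.trans hYM
  have hanti : AntitoneOn (fun t : ℝ => t ^ r) (Ici (M : ℝ)) :=
    (antitoneOn_rpow_Ioi_of_exponent_nonpos (by linarith)).mono (Ici_subset_Ioi.2 hM)
  have htail := hanti.tsum_comp_add_le_integral M (integrableOn_Ioi_rpow_of_lt hr hM)
    fun t ht => rpow_nonneg (hM.trans ht).le r
  rw [integral_Ioi_rpow_of_lt hr hM] at htail
  have hs : Summable fun n : ℕ => ((n + M : ℕ) : ℝ) ^ r :=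
    (summable_nat_add_iff M).2 (summable_nat_rpow.2 hr)
  rw [rpowTail_eq_tsum_add r hY.le, hs.tsum_eq_zero_add]
  have h1 : ((0 + M : ℕ) : ℝ) ^ r ≤ Y ^ r := by
    simpa using rpow_le_rpow_of_nonpos hY hYM.le (by linarith)
  have h2 : Y ^ (r + 1) / (r + 1) ≤ (M : ℝ) ^ (r + 1) / (r + 1) :=
    div_le_div_of_nonpos_of_le (by linarith) (rpow_le_rpow_of_nonpos hY hYM.le (by linarith))
  have h3 : ∑' n : ℕ, ((n + 1 + M : ℕ) : ℝ) ^ r = ∑' n : ℕ, ((n + M + 1 : ℕ) : ℝ) ^ r := by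
    simp only [Nat.add_right_comm]
  rw [neg_div] at htail ⊢
  linarith

lemma le_rpowTail (hr : r < -1) (hY : 0 < Y) : -Y ^ (r + 1) / (r + 1) - Y ^ r ≤ rpowTail r Y := by
  set M : ℕ := ⌊Y⌋₊ + 1
  have hYM : Y < M := by simpa [M] using Nat.lt_floor_add_one Y
  have hMY : (M : ℝ) ≤ Y + 1 := by simpa [M] using Nat.floor_le hY.le
  have hM : (0 : ℝ) < M := hY.trans hYM
  have hanti : AntitoneOn (fun t : ℝ => t ^ r) (Ici (M : ℝ)) :=
    (antitoneOn_rpow_Ioi_of_exponent_nonpos (by linarith)).mono (Ici_subset_Ioi.2 hM)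
  have htail := hanti.integral_le_tsum_comp_add M (summable_nat_rpow.2 hr)
    fun t ht => rpow_nonneg (hM.trans ht).le r
  rw [integral_Ioi_rpow_of_lt hr hM] at htail
  have hstep := sub_rpow_div_le_rpow (r := r) (by linarith) (by linarith) hY
  have hM' : (M : ℝ) ^ (r + 1) / (r + 1) ≤ (Y + 1) ^ (r + 1) / (r + 1) :=
    div_le_div_of_nonpos_of_le (by linarith) (rpow_le_rpow_of_nonpos hM hMY (by linarith))
  rw [rpowTail_eq_tsum_add r hY.le]
  rw [sub_div] at hstep
  rw [neg_div] at htail ⊢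
  linarith

lemma abs_rpowTail_add_le (hr : r < -1) (hY : 0 < Y) :
    |rpowTail r Y + Y ^ (r + 1) / (r + 1)| ≤ Y ^ r := by
  have h1 := rpowTail_le hr hY
  have h2 := le_rpowTail hr hY
  rw [neg_div] at h1 h2
  exact abs_le.2 ⟨by linarith, by linarith⟩

end RpowTail

lemma riemannZeta_ofReal_re_eq_tsum {s : ℝ} (hs : 1 < s) :
    (riemannZeta s).re = ∑' n : ℕ, (n : ℝ) ^ (-s) := by
  rw [zeta_eq_tsum_one_div_nat_cpow (by simpa using hs)]
  have h : ∀ n : ℕ, 1 / (n : ℂ) ^ (s : ℂ) = (((n : ℝ) ^ (-s) : ℝ) : ℂ) := fun n => by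
    rw [Complex.ofReal_cpow (Nat.cast_nonneg n), Complex.ofReal_neg, Complex.cpow_neg, one_div]
    simp
  simp_rw [h, ← Complex.ofReal_tsum, Complex.ofReal_re]

lemma exists_eq_add_mul_of_abs_sub_le {x y e : ℝ} (h : |x - y| ≤ e) :
    ∃ θ : ℝ, |θ| ≤ 1 ∧ x = y + θ * e := by
  rcases (abs_nonneg _ |>.trans h).eq_or_lt with he | he
  · refine ⟨0, by simp, ?_⟩
    rw [← he, abs_nonpos_iff, sub_eq_zero] at h
    simp [h]
  · refine ⟨(x - y) / e, ?_, by field_simp; ring⟩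
    rw [abs_div, abs_of_pos he]
    exact div_le_one_of_le₀ h he.le

lemma hasSum_sum_divisorsAntidiagonal {α : Type*} [AddCommGroup α] [UniformSpace α]
    [IsUniformAddGroup α] [CompleteSpace α] [T2Space α] {f : ℕ × ℕ → α} {a : α}
    (hf : HasSum f a) (hf0 : ∀ q : ℕ × ℕ, q.1 * q.2 = 0 → f q = 0) :
    HasSum (fun n : ℕ => ∑ q ∈ n.divisorsAntidiagonal, f q) a := by
  convert hf.tsum_fiberwise (fun q : ℕ × ℕ => q.1 * q.2) with n
  rcases eq_or_ne n 0 with rfl | hn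
  · rw [Nat.divisorsAntidiagonal_zero, Finset.sum_empty, eq_comm]
    exact (tsum_congr fun q : (fun q : ℕ × ℕ => q.1 * q.2) ⁻¹' {0} => hf0 q.1 q.2).trans
      tsum_zero
  · rw [show (fun q : ℕ × ℕ => q.1 * q.2) ⁻¹' {n} = n.divisorsAntidiagonal by ext; simp [hn],
      Finset.tsum_subtype']

lemma sum_divisorsAntidiagonal_rpow_mul_rpow (a s : ℝ) (n : ℕ) :
    ∑ q ∈ n.divisorsAntidiagonal, (q.1 : ℝ) ^ (a - s) * (q.2 : ℝ) ^ (-s) =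
      da a n / (n : ℝ) ^ s := by
  have h : ∀ q ∈ n.divisorsAntidiagonal,
      (q.1 : ℝ) ^ (a - s) * (q.2 : ℝ) ^ (-s) = (q.1 : ℝ) ^ a * (n : ℝ) ^ (-s) := by
    intro q hq
    have hq1 : (0 : ℝ) < q.1 :=
      Nat.cast_pos.2 (Nat.pos_of_ne_zero (Nat.ne_zero_of_mem_divisorsAntidiagonal hq).1)
    rw [← (Nat.mem_divisorsAntidiagonal.1 hq).1, Nat.cast_mul, mul_rpow hq1.le (Nat.cast_nonneg _),
      sub_eq_add_neg, rpow_add hq1]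
    ring
  rw [Finset.sum_congr rfl h, ← Finset.sum_mul,
    Nat.sum_divisorsAntidiagonal (fun i _ => (i : ℝ) ^ a), da, rpow_neg (Nat.cast_nonneg n),
    div_eq_mul_inv]

lemma tsum_tail_da_eq_tsum_rpowTail (a s X : ℝ) (hs : 1 < s) (has : a - s < -1) :
    ∑' n : ℕ, (if X < n then da a n / (n : ℝ) ^ s else 0) =
      ∑' m : ℕ, (m : ℝ) ^ (a - s) * rpowTail (-s) (X / m) := by
  set G : ℕ × ℕ → ℝ := fun q =>
    if X < q.1 * q.2 then (q.1 : ℝ) ^ (a - s) * (q.2 : ℝ) ^ (-s) else 0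
  have hG : Summable G := by
    have hprod := (summable_nat_rpow.2 has).mul_of_nonneg
      (summable_nat_rpow.2 (by linarith : -s < -1)) (fun _ => by positivity)
      (fun _ => by positivity)
    refine hprod.of_nonneg_of_le (fun q => by simp only [G]; split_ifs <;> positivity) fun q => ?_
    simp only [G]; split_ifs <;> [exact le_rfl; positivity]
  -- the terms with `m = 0` or `k = 0` vanish because `(0 : ℝ) ^ r = 0` for `r ≠ 0`
  have hG0 : ∀ q : ℕ × ℕ, q.1 * q.2 = 0 → G q = 0 := by
    rintro ⟨m, k⟩ hmk
    rcases Nat.mul_eq_zero.1 hmk with rfl | rfl <;>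
      simp [G, zero_rpow (by linarith : a - s ≠ 0), zero_rpow (by linarith : -s ≠ 0)]
  have hterm : ∀ n : ℕ,
      ∑ q ∈ n.divisorsAntidiagonal, G q = if X < n then da a n / (n : ℝ) ^ s else 0 := by
    intro n
    have hGn : ∀ q ∈ n.divisorsAntidiagonal,
        G q = if X < n then (q.1 : ℝ) ^ (a - s) * (q.2 : ℝ) ^ (-s) else 0 := fun q hq => by
      simp only [G]; rw [← Nat.cast_mul, (Nat.mem_divisorsAntidiagonal.1 hq).1]
    rw [Finset.sum_congr rfl hGn]
    split_ifs
    exacts [sum_divisorsAntidiagonal_rpow_mul_rpow a s n, Finset.sum_const_zero]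
  have hfib := hasSum_sum_divisorsAntidiagonal hG.hasSum hG0
  simp only [hterm] at hfib
  rw [hfib.tsum_eq, hG.tsum_prod]
  refine tsum_congr fun m => ?_
  rcases Nat.eq_zero_or_pos m with rfl | hm
  · simp [G, zero_rpow (by linarith : a - s ≠ 0)]
  · rw [rpowTail, ← tsum_mul_left]
    refine tsum_congr fun k => ?_
    simp only [G, div_lt_iff₀' (Nat.cast_pos.2 hm : (0 : ℝ) < m)]
    split_ifs <;> simp

lemma tsum_rpow_mul_rpowTail_div_eq {r t X : ℝ} (hr : r < -1) (ht : t < -1) (hX : 0 ≤ X) :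
    ∑' m : ℕ, (m : ℝ) ^ r * rpowTail t (X / m) =
      ∑ i ∈ Finset.range ⌊X⌋₊, ((i + 1 : ℕ) : ℝ) ^ r * rpowTail t (X / (i + 1 : ℕ)) +
        rpowTail r X * ∑' k : ℕ, (k : ℝ) ^ t := by
  have hu : Summable fun m : ℕ => (m : ℝ) ^ r * rpowTail t (X / m) :=
    (summable_nat_rpow.2 hr).mul_right (∑' k : ℕ, (k : ℝ) ^ t) |>.of_nonneg_of_le
      (fun m => mul_nonneg (by positivity) rpowTail_nonneg)
      fun m => mul_le_mul_of_nonneg_left (rpowTail_le_tsum ht) (by positivity)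
  rw [← hu.sum_add_tsum_nat_add (⌊X⌋₊ + 1), Finset.sum_range_succ', rpowTail_eq_tsum_add r hX,
    ← tsum_mul_right]
  simp only [Nat.cast_zero, zero_rpow (by linarith : r ≠ 0), zero_mul, add_zero]
  congr 1
  refine tsum_congr fun j => ?_
  rw [rpowTail_of_lt_one (by linarith) ((div_lt_one (by positivity)).2 ?_)]
  push_cast
  linarith [Nat.lt_floor_add_one X, (Nat.cast_nonneg j : (0 : ℝ) ≤ j)]

lemma rpow_mul_rpowTail_div_le {c t X m : ℝ} (ht : t < -1) (hX : 0 < X) (hm : 0 < m) :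
    m ^ c * rpowTail t (X / m) ≤
      -X ^ (t + 1) / (t + 1) * m ^ (c - (t + 1)) + X ^ t * m ^ (c - t) := by
  calc m ^ c * rpowTail t (X / m) ≤ m ^ c * (-(X / m) ^ (t + 1) / (t + 1) + (X / m) ^ t) :=
        mul_le_mul_of_nonneg_left (rpowTail_le ht (by positivity)) (by positivity)
    _ = _ := by
        rw [div_rpow hX.le hm.le, div_rpow hX.le hm.le, rpow_sub hm, rpow_sub hm]
        field_simp

lemma sum_rpow_mul_rpowTail_le {a lam X : ℝ} (ha0 : 0 < a) (ha1 : a ≤ 1) (hlam : 0 < lam)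
    (hX : 0 < X) :
    ∑ i ∈ Finset.range ⌊X⌋₊,
        ((i + 1 : ℕ) : ℝ) ^ (-(1 + lam)) * rpowTail (-(1 + a + lam)) (X / (i + 1 : ℕ)) ≤
      (1 / (1 + a) + 1 / (a * (a + lam))) * X ^ (-lam) + X ^ (-(1 + lam)) := by
  have hN : (⌊X⌋₊ : ℝ) ≤ X := Nat.floor_le hX.le
  have hterm : ∀ i ∈ Finset.range ⌊X⌋₊,
      ((i + 1 : ℕ) : ℝ) ^ (-(1 + lam)) * rpowTail (-(1 + a + lam)) (X / (i + 1 : ℕ)) ≤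
        X ^ (-(a + lam)) / (a + lam) * ((i + 1 : ℕ) : ℝ) ^ (a - 1) +
          X ^ (-(1 + a + lam)) * ((i + 1 : ℕ) : ℝ) ^ a := fun i _ => by
    have h := rpow_mul_rpowTail_div_le (c := -(1 + lam)) (t := -(1 + a + lam)) (by linarith) hX
      (Nat.cast_pos.2 i.succ_pos)
    rwa [show -(1 + a + lam) + 1 = -(a + lam) by ring,
      show -(1 + lam) - -(a + lam) = a - 1 by ring,
      show -(1 + lam) - -(1 + a + lam) = a by ring, neg_div_neg_eq] at h
  have hsum1 : ∑ i ∈ Finset.range ⌊X⌋₊, ((i + 1 : ℕ) : ℝ) ^ (a - 1) ≤ X ^ a / a := by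
    have h := sum_range_add_one_rpow_le_of_nonpos (r := a - 1) (by linarith) (by linarith) ⌊X⌋₊
    rw [sub_add_cancel] at h
    exact h.trans (div_le_div_of_nonneg_right (rpow_le_rpow (by positivity) hN ha0.le) ha0.le)
  have hsum2 : ∑ i ∈ Finset.range ⌊X⌋₊, ((i + 1 : ℕ) : ℝ) ^ a ≤ X ^ a + X ^ (a + 1) / (a + 1) := by
    refine (sum_range_add_one_rpow_le ha0.le ⌊X⌋₊).trans (add_le_add ?_ ?_)
    · exact rpow_le_rpow (by positivity) hN ha0.le
    · exact div_le_div_of_nonneg_right (rpow_le_rpow (by positivity) hN (by linarith))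
        (by linarith)
  calc _ ≤ ∑ i ∈ Finset.range ⌊X⌋₊, (X ^ (-(a + lam)) / (a + lam) * ((i + 1 : ℕ) : ℝ) ^ (a - 1) +
          X ^ (-(1 + a + lam)) * ((i + 1 : ℕ) : ℝ) ^ a) := Finset.sum_le_sum hterm
    _ = X ^ (-(a + lam)) / (a + lam) * ∑ i ∈ Finset.range ⌊X⌋₊, ((i + 1 : ℕ) : ℝ) ^ (a - 1) +
          X ^ (-(1 + a + lam)) * ∑ i ∈ Finset.range ⌊X⌋₊, ((i + 1 : ℕ) : ℝ) ^ a := by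
        rw [Finset.sum_add_distrib, Finset.mul_sum, Finset.mul_sum]
    _ ≤ X ^ (-(a + lam)) / (a + lam) * (X ^ a / a) +
          X ^ (-(1 + a + lam)) * (X ^ a + X ^ (a + 1) / (a + 1)) := by gcongr
    _ = _ := by
        have e1 : X ^ (-(a + lam)) * X ^ a = X ^ (-lam) := by rw [← rpow_add hX]; ring_nf
        have e2 : X ^ (-(1 + a + lam)) * X ^ a = X ^ (-(1 + lam)) := by rw [← rpow_add hX]; ring_nf
        have e3 : X ^ (-(1 + a + lam)) * X ^ (a + 1) = X ^ (-lam) := by rw [← rpow_add hX]; ring_nf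
        calc _ = X ^ (-(a + lam)) * X ^ a / (a + lam) / a + X ^ (-(1 + a + lam)) * X ^ a +
              X ^ (-(1 + a + lam)) * X ^ (a + 1) / (a + 1) := by ring
          _ = _ := by rw [e1, e2, e3]; field_simp; ring

theorem abs_tsum_tail_da_sub_le {a lam X : ℝ} (ha0 : 0 < a) (ha1 : a ≤ 1) (hlam : 0 < lam)
    (hX : 0 < X) :
    |(∑' n : ℕ, if X < (n : ℝ) then da a n / (n : ℝ) ^ (1 + a + lam) else 0) -
        (riemannZeta (1 + a + lam : ℝ)).re / (lam * X ^ lam)| ≤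
      (1 / (1 + a) + 1 / (a * (a + lam))) / X ^ lam +
        ((riemannZeta (1 + a + lam : ℝ)).re + 1 / (a + lam) + 1) / X ^ (1 + lam) := by
  have hs : (1 : ℝ) < 1 + a + lam := by linarith
  rw [tsum_tail_da_eq_tsum_rpowTail a (1 + a + lam) X hs (by linarith),
    show a - (1 + a + lam) = -(1 + lam) by ring,
    tsum_rpow_mul_rpowTail_div_eq (by linarith) (by linarith) hX.le,
    ← riemannZeta_ofReal_re_eq_tsum hs]
  set Z := (riemannZeta (1 + a + lam : ℝ)).re
  have hZ : 0 ≤ Z := (riemannZeta_re_pos_of_one_lt hs).le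
  have hB0 : 0 ≤ ∑ i ∈ Finset.range ⌊X⌋₊,
      ((i + 1 : ℕ) : ℝ) ^ (-(1 + lam)) * rpowTail (-(1 + a + lam)) (X / (i + 1 : ℕ)) :=
    Finset.sum_nonneg fun i _ => mul_nonneg (by positivity) rpowTail_nonneg
  have hB := sum_rpow_mul_rpowTail_le ha0 ha1 hlam hX
  have hT := abs_rpowTail_add_le (r := -(1 + lam)) (by linarith) hX
  rw [show -(1 + lam) + 1 = -lam by ring, div_neg, ← sub_eq_add_neg] at hT
  have hZT : |Z * (rpowTail (-(1 + lam)) X - X ^ (-lam) / lam)| ≤ Z * X ^ (-(1 + lam)) := by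
    rw [abs_mul, abs_of_nonneg hZ]
    exact mul_le_mul_of_nonneg_left hT hZ
  have hQ : 0 ≤ (X ^ (1 + lam))⁻¹ / (a + lam) := by positivity
  have hP : 0 ≤ (1 / (1 + a) + 1 / (a * (a + lam))) * (X ^ lam)⁻¹ := by positivity
  simp only [rpow_neg hX.le] at hB hZT
  have hsplit : rpowTail (-(1 + lam)) X * Z - Z / (lam * X ^ lam) =
      Z * (rpowTail (-(1 + lam)) X - (X ^ lam)⁻¹ / lam) := by ring
  have herr : (1 / (1 + a) + 1 / (a * (a + lam))) / X ^ lam +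
      (Z + 1 / (a + lam) + 1) / X ^ (1 + lam) = (1 / (1 + a) + 1 / (a * (a + lam))) * (X ^ lam)⁻¹ +
        Z * (X ^ (1 + lam))⁻¹ + (X ^ (1 + lam))⁻¹ / (a + lam) + (X ^ (1 + lam))⁻¹ := by ring
  rw [add_sub_assoc, hsplit, herr]
  rw [abs_le] at hZT ⊢
  constructor <;> linarith [hZT.1, hZT.2]

theorem tail_sum_da (σ lam X : ℝ) (hσ0 : 0 < σ) (hσ1 : σ < 1 / 2) (hlam : 0 < lam)
    (hX : 1 ≤ X) :
    ∃ θ : ℝ, |θ| ≤ 1 ∧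
      (∑' n : ℕ, if X < (n : ℝ) then da (1 - 2 * σ) n / (n : ℝ) ^ (2 - 2 * σ + lam) else 0) =
        (riemannZeta (2 - 2 * σ + lam)).re / (lam * X ^ lam)
          + θ * ((1 / (2 - 2 * σ) + 1 / ((1 - 2 * σ) * (1 - 2 * σ + lam))) / X ^ lam
            + ((riemannZeta (2 - 2 * σ + lam)).re + 1 / (1 - 2 * σ + lam) + 1) / X ^ (1 + lam)) := by
  obtain ⟨θ, hθ, h⟩ := exists_eq_add_mul_of_abs_sub_le
    (abs_tsum_tail_da_sub_le (a := 1 - 2 * σ) (by linarith) (by linarith) hlam (by linarith))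
  refine ⟨θ, hθ, ?_⟩
  rw [show (2 : ℂ) - 2 * σ + lam = ((1 + (1 - 2 * σ) + lam : ℝ) : ℂ) by push_cast; ring,
    show 2 - 2 * σ + lam = 1 + (1 - 2 * σ) + lam by ring, show 2 - 2 * σ = 1 + (1 - 2 * σ) by ring]
  exact h
end
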